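/- arXiv:2304.07561 — 5 statements merged into one kernel-verified Lean document; each statement's English description precedes it below -/
import Mathlib

section
/- Let G ∈ F_q^{2N×N} be a strongly self-orthogonal matrix (Gᵀ J G = 0 and rank(G) = N), let H ∈ F_q^{2N×N} be such that [G | H] is invertible, and let M = [0 | I_N]·[G | H]⁻¹ be the bottom N rows of the inverse. Then M J Mᵀ = 0 and rank(M) = N, i.e., Mᵀ is strongly self-orthogonal. -/
/-!
With `A = [G | H]`, the rows of `M` are the last `N` rows of `A⁻¹`, so `M J Mᵀ` is the lower-right
block of `A⁻¹ J A⁻ᵀ = -(Aᵀ J A)⁻¹`. The Gram matrix `Aᵀ J A` is invertible with upper-left block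
`Gᵀ J G = 0`, and an invertible matrix `[[0, B], [C, D]]` with square blocks has an inverse whose
lower-right block vanishes. The rank follows from `M H = I`.
-/

open Matrix

/-- The standard symplectic structure matrix `J = [[0, -I], [I, 0]]`. -/
def Jmat (F : Type*) [Field F] (N : ℕ) : Matrix (Fin N ⊕ Fin N) (Fin N ⊕ Fin N) F :=
  Matrix.fromBlocks 0 (-1) 1 0

namespace Matrix

variable {m n p q R : Type*}

theorem rank_eq_card_of_mul_eq_one [Fintype m] [Fintype n] [DecidableEq m] [CommSemiring R]
    [StrongRankCondition R] {M : Matrix m n R} {H : Matrix n m R} (h : M * H = 1) :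
    M.rank = Fintype.card m :=
  le_antisymm (rank_le_card_height M) (by simpa [h, rank_one] using rank_mul_le_left M H)

theorem fromCols_zero_one_mul [Fintype m] [Fintype n] [DecidableEq n] [Semiring R]
    (X : Matrix (m ⊕ n) p R) : fromCols (0 : Matrix n m R) (1 : Matrix n n R) * X = X.toRows₂ := by
  conv_lhs => rw [← fromRows_toRows X]
  rw [fromCols_mul_fromRows, Matrix.zero_mul, Matrix.one_mul, zero_add]

theorem toRows₂_mul_mul_transpose_toRows₂ [Fintype p] [CommSemiring R]
    (X : Matrix (m ⊕ n) p R) (J : Matrix p p R) :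
    X.toRows₂ * J * X.toRows₂ᵀ = (X * J * Xᵀ).toBlocks₂₂ := by
  ext i j
  simp [mul_apply, toRows₂, toBlocks₂₂]

theorem transpose_fromCols_mul_mul_fromCols [Fintype m] [CommSemiring R] (G H : Matrix m n R)
    (J : Matrix m m R) :
    (fromCols G H)ᵀ * J * fromCols G H =
      fromBlocks (Gᵀ * J * G) (Gᵀ * J * H) (Hᵀ * J * G) (Hᵀ * J * H) := by
  rw [transpose_fromCols, fromRows_mul, fromRows_mul_fromCols]

theorem toBlocks₂₂_neg [Neg R] (X : Matrix (m ⊕ n) (p ⊕ q) R) : (-X).toBlocks₂₂ = -X.toBlocks₂₂ :=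
  rfl

theorem toBlocks₂₂_inv_fromBlocks_zero₁₁ [Fintype n] [DecidableEq n] [CommRing R]
    {B C D : Matrix n n R} (hS : IsUnit (fromBlocks 0 B C D)) :
    (fromBlocks 0 B C D)⁻¹.toBlocks₂₂ = 0 := by
  set X := (fromBlocks 0 B C D)⁻¹
  have hXS : fromBlocks X.toBlocks₁₁ X.toBlocks₁₂ X.toBlocks₂₁ X.toBlocks₂₂ * fromBlocks 0 B C D
      = fromBlocks 1 0 0 1 := by
    rw [fromBlocks_toBlocks, fromBlocks_one]
    exact nonsing_inv_mul _ ((isUnit_iff_isUnit_det _).mp hS)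
  rw [fromBlocks_multiply] at hXS
  obtain ⟨h₁₁, -, h₂₁, -⟩ := fromBlocks_inj.mp hXS
  simp only [Matrix.mul_zero, zero_add] at h₁₁ h₂₁
  -- squareness of the blocks turns the left inverse `X₁₂` of `C` into a right inverse
  calc X.toBlocks₂₂ = X.toBlocks₂₂ * (C * X.toBlocks₁₂) := by rw [mul_eq_one_comm.mp h₁₁, mul_one]
    _ = 0 := by rw [← Matrix.mul_assoc, h₂₁, Matrix.zero_mul]

end Matrix

theorem Jmat_mul_neg_self (F : Type*) [Field F] (N : ℕ) : Jmat F N * -Jmat F N = 1 := by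
  simp [Jmat, fromBlocks_multiply, ← fromBlocks_one, fromBlocks_neg]

theorem inv_Jmat (F : Type*) [Field F] (N : ℕ) : (Jmat F N)⁻¹ = -Jmat F N :=
  inv_eq_right_inv (Jmat_mul_neg_self F N)

theorem isUnit_Jmat (F : Type*) [Field F] (N : ℕ) : IsUnit (Jmat F N) :=
  (isUnit_iff_isUnit_det _).mpr (isUnit_det_of_right_inverse (Jmat_mul_neg_self F N))

theorem GH_construction_sso_general {F : Type*} [Field F] {N : ℕ}
    (G H : Matrix (Fin N ⊕ Fin N) (Fin N) F)
    (hG : Gᵀ * Jmat F N * G = 0)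
    (hGH : IsUnit (Matrix.fromCols G H)) :
    (Matrix.fromCols (0 : Matrix (Fin N) (Fin N) F) (1 : Matrix (Fin N) (Fin N) F) * (Matrix.fromCols G H)⁻¹) *
        Jmat F N *
        (Matrix.fromCols (0 : Matrix (Fin N) (Fin N) F) (1 : Matrix (Fin N) (Fin N) F) * (Matrix.fromCols G H)⁻¹)ᵀ = 0 ∧
      (Matrix.fromCols (0 : Matrix (Fin N) (Fin N) F) (1 : Matrix (Fin N) (Fin N) F) *
        (Matrix.fromCols G H)⁻¹).rank = N := by
  set A := fromCols G H
  have hGram : A⁻¹ * Jmat F N * A⁻¹ᵀ = -(Aᵀ * Jmat F N * A)⁻¹ := by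
    rw [Matrix.mul_inv_rev, Matrix.mul_inv_rev, inv_Jmat, transpose_nonsing_inv]
    simp [Matrix.mul_assoc]
  have hS : IsUnit (Aᵀ * Jmat F N * A) :=
    ((isUnit_transpose A).mpr hGH |>.mul (isUnit_Jmat F N)).mul hGH
  rw [transpose_fromCols_mul_mul_fromCols, hG] at hS
  constructor
  · rw [fromCols_zero_one_mul (X := A⁻¹), toRows₂_mul_mul_transpose_toRows₂, hGram,
      transpose_fromCols_mul_mul_fromCols, hG, toBlocks₂₂_neg, toBlocks₂₂_inv_fromBlocks_zero₁₁ hS,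
      neg_zero]
  · refine (rank_eq_card_of_mul_eq_one (H := A * fromRows (0 : Matrix (Fin N) (Fin N) F) (1 : Matrix (Fin N) (Fin N) F)) ?_).trans (Fintype.card_fin N)
    rw [Matrix.mul_assoc, ← Matrix.mul_assoc A⁻¹, nonsing_inv_mul _ ((isUnit_iff_isUnit_det A).mp hGH),
      Matrix.one_mul, fromCols_mul_fromRows]
    simp

/-- If `G` is strongly self-orthogonal and `[G | H]` is invertible, then
`M = [0 | I]·[G | H]⁻¹` has `M J Mᵀ = 0` and `rank M = N`. -/
theorem GH_construction_sso {F : Type*} [Field F] {N : ℕ}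
    (G H : Matrix (Fin N ⊕ Fin N) (Fin N) F)
    (hG : Gᵀ * Jmat F N * G = 0) (hGrank : G.rank = N)
    (hGH : IsUnit (Matrix.fromCols G H)) :
    (Matrix.fromCols (0 : Matrix (Fin N) (Fin N) F) (1 : Matrix (Fin N) (Fin N) F) * (Matrix.fromCols G H)⁻¹) *
        Jmat F N *
        (Matrix.fromCols (0 : Matrix (Fin N) (Fin N) F) (1 : Matrix (Fin N) (Fin N) F) * (Matrix.fromCols G H)⁻¹)ᵀ = 0 ∧
      (Matrix.fromCols (0 : Matrix (Fin N) (Fin N) F) (1 : Matrix (Fin N) (Fin N) F) *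
        (Matrix.fromCols G H)⁻¹).rank = N :=
  GH_construction_sso_general G H hG hGH
end

section
/- Let M ∈ F_q^{N×2N} with Mᵀ strongly self-orthogonal (M J Mᵀ = 0, rank(M) = N). Then there exist matrices G, H ∈ F_q^{2N×N} such that G is strongly self-orthogonal (Gᵀ J G = 0, rank(G) = N), the 2N×2N matrix [G | H] is invertible, and M = [0 | I_N]·[G | H]⁻¹. In other words, every SSO transfer matrix arises from a (G,H)-construction. -/
open Matrix

/-!
Take `G = J Mᵀ`. Since `J` is invertible, `G` has rank `N`; since `Jᵀ = -J` and `J² = -1`,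
`Gᵀ J G = M J Mᵀ = 0` and `M G = M J Mᵀ = 0`. As `M` has full row rank it has a right inverse `H`,
so `M [G | H] = [0 | I]`. This forces `[G | H]` to be injective: if `G x + H y = 0`, applying `M`
gives `y = 0`, and then `x = 0` because `G` has full column rank. Hence `[G | H]` is invertible
and `M = [0 | I] [G | H]⁻¹`.
-/

namespace Matrix

variable {ι m n K : Type*} [Field K]

theorem mulVec_injective_of_rank_eq_card [Fintype n] {A : Matrix m n K}
    (h : A.rank = Fintype.card n) : Function.Injective A.mulVec := by
  have hker : Module.finrank K (LinearMap.ker A.mulVecLin) = 0 := by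
    have := LinearMap.finrank_range_add_finrank_ker A.mulVecLin
    rw [← rank, h, Module.finrank_fintype_fun_eq_card] at this
    omega
  rw [← coe_mulVecLin, ← LinearMap.ker_eq_bot]
  exact Submodule.finrank_eq_zero.mp hker

theorem exists_mul_eq_one_of_rank_eq_card [Fintype m] [DecidableEq m] [Fintype n]
    {A : Matrix m n K} (h : A.rank = Fintype.card m) : ∃ B : Matrix n m K, A * B = 1 := by
  rw [← mulVec_surjective_iff_exists_right_inverse, ← coe_mulVecLin,
    ← LinearMap.range_eq_top]
  apply Submodule.eq_top_of_finrank_eq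
  rw [← rank, h, Module.finrank_fintype_fun_eq_card]

theorem fromCols_mulVec_injective [Fintype ι] [Fintype m] [Fintype n]
    [DecidableEq m] {G : Matrix ι n K} {H : Matrix ι m K} {M : Matrix m ι K}
    (hG : Function.Injective G.mulVec) (hMG : M * G = 0) (hMH : M * H = 1) :
    Function.Injective (fromCols G H).mulVec := by
  rw [← coe_mulVecLin, injective_iff_map_eq_zero]
  intro v hv
  rw [mulVecLin_apply, ← Sum.elim_comp_inl_inr v, fromCols_mulVec_sumElim] at hv
  have hy : v ∘ Sum.inr = 0 := by
    simpa [mulVec_add, mulVec_mulVec, hMG, hMH] using congrArg (M *ᵥ ·) hv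
  have hx : v ∘ Sum.inl = 0 := hG <| by simpa [hy] using hv
  rw [← Sum.elim_comp_inl_inr v, hx, hy]
  ext (i | i) <;> rfl

end Matrix

section Jmat

variable {F : Type*} [Field F] {N : ℕ}

theorem Jmat_mul_Jmat : Jmat F N * Jmat F N = -1 := by
  rw [Jmat, fromBlocks_multiply, ← fromBlocks_one, fromBlocks_neg]
  simp

theorem Jmat_transpose : (Jmat F N)ᵀ = -Jmat F N := by
  rw [Jmat, fromBlocks_transpose, fromBlocks_neg]
  simp

theorem isUnit_det_Jmat : IsUnit (Jmat F N).det :=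
  isUnit_det_of_right_inverse (B := -Jmat F N) (by rw [Matrix.mul_neg, Jmat_mul_Jmat, neg_neg])

theorem symplecticForm_Jmat_mul_transpose {m : Type*} [Fintype m] (M : Matrix m (Fin N ⊕ Fin N) F) :
    (Jmat F N * Mᵀ)ᵀ * Jmat F N * (Jmat F N * Mᵀ) = M * Jmat F N * Mᵀ := by
  simp only [transpose_mul, transpose_transpose, Jmat_transpose, Matrix.mul_assoc,
    Jmat_mul_Jmat, Matrix.neg_mul, Matrix.mul_neg, neg_neg, Matrix.one_mul]

end Jmat

/-- Every SSO transfer matrix `M` arises from a `(G,H)`-construction: there exist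
`G` strongly self-orthogonal and `H` with `[G | H]` invertible such that
`M = [0 | I]·[G | H]⁻¹`. -/
theorem sso_from_GH_construction {F : Type*} [Field F] {N : ℕ}
    (M : Matrix (Fin N) (Fin N ⊕ Fin N) F)
    (hM : M * Jmat F N * Mᵀ = 0) (hrank : M.rank = N) :
    ∃ G H : Matrix (Fin N ⊕ Fin N) (Fin N) F,
      Gᵀ * Jmat F N * G = 0 ∧ G.rank = N ∧ IsUnit (Matrix.fromCols G H) ∧
      M = Matrix.fromCols (0 : Matrix (Fin N) (Fin N) F) 1 *
        (Matrix.fromCols G H)⁻¹ := by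
  set G := Jmat F N * Mᵀ
  have hGrank : G.rank = N := by
    rw [rank_mul_eq_right_of_isUnit_det _ _ isUnit_det_Jmat, rank_transpose, hrank]
  have hMG : M * G = 0 := by rw [← Matrix.mul_assoc, hM]
  obtain ⟨H, hMH⟩ := exists_mul_eq_one_of_rank_eq_card (A := M) (by rw [hrank, Fintype.card_fin])
  have hunit : IsUnit (fromCols G H) := mulVec_injective_iff_isUnit.mp <|
    fromCols_mulVec_injective
      (mulVec_injective_of_rank_eq_card (by rw [hGrank, Fintype.card_fin])) hMG hMH
  refine ⟨G, H, (symplecticForm_Jmat_mul_transpose M).trans hM, hGrank, hunit, ?_⟩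
  conv_lhs => rw [← Matrix.mul_nonsing_inv_cancel_right _ M ((isUnit_iff_isUnit_det _).mp hunit)]
  rw [Matrix.mul_fromCols, hMG, hMH]
  -- the product in the statement elaborates through `CStarMatrix`'s `HMul`, equal to `Matrix`'s by `rfl`
  rfl
end

section
/- Let M = [M_l | M_r] ∈ F_q^{N×2N} with Mᵀ strongly self-orthogonal (M J Mᵀ = 0, rank M = N). Then there exists a diagonal matrix Σ ∈ {0,1}^{N×N} such that, setting M' = M · [[I-Σ, Σ], [-Σ, I-Σ]] = [M'_l | M'_r], the matrix (M')ᵀ is strongly self-orthogonal and M'_l is invertible. -/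
open Matrix

/-!
Write `M = [A | B]`; isotropy of the rows of `M` says exactly that `A Bᵀ` is symmetric. Let `T` be a
set of columns of `A` forming a basis of its column space and let `Σ` select the columns outside
`T`, so that the left half of `M'` consists of the columns of `A` in `T` and the negated columns of
`B` outside `T`. If `v` annihilates that left half, then `v A` vanishes on `T`, hence everywhere,
while `w = v B` vanishes outside `T` and satisfies `A w = A Bᵀ v = B Aᵀ v = 0`, so `w = 0` by
independence of the columns in `T`. Thus `v M = 0`, and `v = 0` by full row rank. Isotropy and rank
survive because `[[I-Σ, Σ], [-Σ, I-Σ]]` is symplectic whenever `Σ` is a symmetric idempotent.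
-/

namespace Matrix

section Columns

variable {m n R : Type*} [CommRing R]

lemma vecMul_eq_zero_of_span_cols [Fintype m] {A : Matrix m n R} {T : Set n}
    (hspan : ∀ i, Aᵀ i ∈ Submodule.span R (Aᵀ '' T)) {v : m → R}
    (hv : ∀ i ∈ T, (v ᵥ* A) i = 0) : v ᵥ* A = 0 := by
  have hle : Submodule.span R (Aᵀ '' T) ≤ LinearMap.ker (dotProductBilin R R v) := by
    rw [Submodule.span_le]
    rintro _ ⟨i, hi, rfl⟩
    exact hv i hi
  funext i
  exact hle (hspan i)

lemma eq_zero_of_mulVec_eq_zero_of_linearIndepOn [Fintype n] {A : Matrix m n R} {T : Set n}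
    (hli : LinearIndepOn R Aᵀ T) {w : n → R} (hw : A *ᵥ w = 0) (hwT : ∀ i ∉ T, w i = 0) :
    w = 0 := by
  classical
  have hsum : ∑ i ∈ T.toFinset, w i • Aᵀ i = 0 := by
    rw [Finset.sum_subset (Finset.subset_univ _) fun i _ hi => by
      rw [hwT i (by simpa using hi), zero_smul], ← hw]
    ext j
    simp [mulVec, dotProduct, mul_comm]
  funext i
  by_cases hi : i ∈ T
  · exact linearIndepOn_iff'.mp hli T.toFinset w (by simp) hsum i (by simpa using hi)
  · exact hwT i hi

variable [Fintype m] [Fintype n] [DecidableEq n]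

theorem vecMul_injective_of_span_of_linearIndepOn {A B : Matrix m n R}
    (hsym : A * Bᵀ = B * Aᵀ) (hAB : Function.Injective (fromCols A B).vecMul) {T : Set n}
    (hspan : ∀ i, Aᵀ i ∈ Submodule.span R (Aᵀ '' T)) (hli : LinearIndepOn R Aᵀ T) :
    Function.Injective (A * (1 - diagonal (Tᶜ.indicator (1 : n → R))) -
      B * diagonal (Tᶜ.indicator (1 : n → R))).vecMul := by
  refine (injective_iff_map_eq_zero (vecMulLinear _)).mpr fun v hv => ?_
  have hvAT : ∀ i ∈ T, (v ᵥ* A) i = 0 := fun i hi => by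
    simpa [hi, Matrix.mul_sub, ← vecMul_vecMul, vecMul_diagonal] using congrFun hv i
  have hvBT : ∀ i ∉ T, (v ᵥ* B) i = 0 := fun i hi => by
    simpa [hi, Matrix.mul_sub, ← vecMul_vecMul, vecMul_diagonal] using congrFun hv i
  have hvA : v ᵥ* A = 0 := vecMul_eq_zero_of_span_cols hspan hvAT
  have hvB : v ᵥ* B = 0 := by
    refine eq_zero_of_mulVec_eq_zero_of_linearIndepOn hli ?_ hvBT
    rw [← mulVec_transpose, mulVec_mulVec, hsym, ← mulVec_mulVec, mulVec_transpose, hvA,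
      mulVec_zero]
  apply hAB
  change v ᵥ* fromCols A B = 0 ᵥ* fromCols A B
  rw [vecMul_fromCols, hvA, hvB, zero_vecMul, Sum.elim_zero_zero]

end Columns

lemma vecMul_injective_of_rank_eq_card {m n K : Type*} [Field K] [Fintype m] [Fintype n]
    {M : Matrix m n K} (h : M.rank = Fintype.card m) : Function.Injective M.vecMul := by
  rw [vecMul_injective_iff, linearIndependent_iff_card_eq_finrank_span, ← h,
    rank_eq_finrank_span_row]
  rfl

lemma isIdempotentElem_diagonal_indicator {n R : Type*} [DecidableEq n] [Fintype n] [Semiring R]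
    (T : Set n) : IsIdempotentElem (diagonal (T.indicator (1 : n → R))) := by
  rw [IsIdempotentElem, diagonal_mul_diagonal]
  congr 1
  funext i
  by_cases hi : i ∈ T <;> simp [hi]

section Symplectic

variable {l R : Type*} [DecidableEq l] [Fintype l] [CommRing R]

def signedSwap (S : Matrix l l R) : Matrix (l ⊕ l) (l ⊕ l) R :=
  fromBlocks (1 - S) S (-S) (1 - S)

lemma signedSwap_mem_symplecticGroup {S : Matrix l l R} (hS : IsIdempotentElem S)
    (hSt : Sᵀ = S) : signedSwap S ∈ symplecticGroup l R := by
  rw [signedSwap, SymplecticGroup.fromBlocks_mem_iff]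
  simp [hSt, Matrix.mul_sub, Matrix.sub_mul, hS.eq]

lemma toCols₁_fromCols_mul_signedSwap {m : Type*} (A B : Matrix m l R) (S : Matrix l l R) :
    (fromCols A B * signedSwap S).toCols₁ = A * (1 - S) - B * S := by
  rw [signedSwap, fromCols_mul_fromBlocks, toCols₁_fromCols, Matrix.mul_neg, ← sub_eq_add_neg]

lemma fromCols_mul_J_mul_transpose {m : Type*} (A B : Matrix m l R) :
    fromCols A B * J l R * (fromCols A B)ᵀ = B * Aᵀ - A * Bᵀ := by
  rw [J, transpose_fromCols, fromCols_mul_fromBlocks, fromCols_mul_fromRows]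
  simp [sub_eq_add_neg, Matrix.neg_mul, Matrix.mul_neg]

lemma mul_mul_J_mul_transpose_of_mem_symplecticGroup {m : Type*} (M : Matrix m (l ⊕ l) R)
    {P : Matrix (l ⊕ l) (l ⊕ l) R} (hP : P ∈ symplecticGroup l R) :
    M * P * J l R * (M * P)ᵀ = M * J l R * Mᵀ := by
  rw [transpose_mul, Matrix.mul_assoc M, Matrix.mul_assoc M, ← Matrix.mul_assoc (P * J l R),
    SymplecticGroup.mem_iff.mp hP, Matrix.mul_assoc]

end Symplectic

end Matrix

/-- Signed column-swap lemma: for any `M` with SSO transpose there is a diagonal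
0-1 matrix `Σ` such that `M' = M·[[I-Σ, Σ],[-Σ, I-Σ]]` has SSO transpose and
invertible left half. -/
theorem signed_column_swap {F : Type*} [Field F] {N : ℕ}
    (M : Matrix (Fin N) (Fin N ⊕ Fin N) F)
    (hM : M * Jmat F N * Mᵀ = 0) (hrank : M.rank = N) :
    ∃ Sg : Matrix (Fin N) (Fin N) F, Sg.IsDiag ∧ (∀ i, Sg i i = 0 ∨ Sg i i = 1) ∧
      (M * Matrix.fromBlocks (1 - Sg) Sg (-Sg) (1 - Sg)) * Jmat F N *
        (M * Matrix.fromBlocks (1 - Sg) Sg (-Sg) (1 - Sg))ᵀ = 0 ∧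
      (M * Matrix.fromBlocks (1 - Sg) Sg (-Sg) (1 - Sg)).rank = N ∧
      IsUnit ((M * Matrix.fromBlocks (1 - Sg) Sg (-Sg) (1 - Sg)).submatrix id Sum.inl) := by
  set A := M.toCols₁
  set B := M.toCols₂
  have hAB : M = fromCols A B := (fromCols_toCols M).symm
  have hJ : Jmat F N = J (Fin N) F := rfl
  rw [hJ] at hM ⊢
  obtain ⟨T, -, -, hspan, hli⟩ :=
    exists_linearIndepOn_extension (linearIndepOn_empty F Aᵀ) (Set.empty_subset Set.univ)
  set S := diagonal (Tᶜ.indicator (1 : Fin N → F))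
  have hP : signedSwap S ∈ symplecticGroup (Fin N) F :=
    signedSwap_mem_symplecticGroup (isIdempotentElem_diagonal_indicator Tᶜ)
      (diagonal_transpose _)
  have hsym : A * Bᵀ = B * Aᵀ := by
    rw [← sub_eq_zero, ← neg_sub, ← fromCols_mul_J_mul_transpose, ← hAB, hM, neg_zero]
  refine ⟨S, isDiag_diagonal _, fun i => ?_, ?_, ?_, ?_⟩
  · by_cases hi : i ∈ T <;> simp [S, hi]
  · exact (mul_mul_J_mul_transpose_of_mem_symplecticGroup M hP).trans hM
  · exact (rank_mul_eq_left_of_isUnit_det _ M (SymplecticGroup.symplectic_det hP)).trans hrank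
  · rw [← vecMul_injective_iff_isUnit]
    change Function.Injective (M * signedSwap S).toCols₁.vecMul
    rw [hAB, toCols₁_fromCols_mul_signedSwap]
    exact vecMul_injective_of_span_of_linearIndepOn hsym
      (hAB ▸ vecMul_injective_of_rank_eq_card (by simpa using hrank))
      (fun i => hspan (Set.mem_image_of_mem _ (Set.mem_univ i))) hli
end

section
/- A transfer matrix M = [M_l | M_r] ∈ F_q^{N×2N} is expressible as M = P·[I_N | S]·Λ with P ∈ GL_N(F_q), S symmetric, and Λ a local invertible transformation (block matrix [[Λ₁,Λ₂],[Λ₃,Λ₄]] of diagonal blocks with Λ₁Λ₄ - Λ₂Λ₃ invertible) if and only if rank(M) = N and there exists an invertible diagonal matrix Δ ∈ F_q^{N×N} such that the matrix M' = [M_l | M_r Δ] satisfies M' J (M')ᵀ = 0. -/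
open Matrix

/-!
Write `J(e)` for `J` with its identity blocks replaced by `diagonal e`. A local transformation
`Λ` with diagonal blocks `a, b, c, d` satisfies `Λ J(e) Λᵀ = J((a d - b c) e)`. Hence scaling the
right block of `M` by `Δ` turns `J` into `J(Δ)`, and `P [I | S] Λ` is isotropic for
`J((a d - b c)⁻¹)` because `[I | S] J [I | S]ᵀ = S - Sᵀ`.

Conversely, let `[A | B]` have rank `N` with `B Aᵀ = A Bᵀ`. Along a maximal independent set of
columns of `A` keep the columns of `A`, elsewhere take those of `B`: this gives an invertible `C`.
The corresponding signed column swap is a local transformation preserving `J`, so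
`[A | B] = [C | D] Λ` with `D Cᵀ = C Dᵀ`, that is `[C | D] = C [I | C⁻¹ D]` with `C⁻¹ D` symmetric.
-/

section LocalTransform

variable {m n R : Type*} [Fintype n] [DecidableEq n] [CommRing R]

def weightedJ (e : n → R) : Matrix (n ⊕ n) (n ⊕ n) R :=
  fromBlocks 0 (-diagonal e) (diagonal e) 0

/-- The paper's local transformation `[[Λ₁, Λ₂], [Λ₃, Λ₄]]`, each `Λᵢ` diagonal, recorded by the
diagonals; it is a LIT when `a * d - b * c` has no zero entry. -/
def localTransform (a b c d : n → R) : Matrix (n ⊕ n) (n ⊕ n) R :=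
  fromBlocks (diagonal a) (diagonal b) (diagonal c) (diagonal d)

theorem Jmat_eq_weightedJ_one {F : Type*} [Field F] {N : ℕ} : Jmat F N = weightedJ 1 := by
  rw [Jmat, weightedJ, diagonal_one']

omit [Fintype n] in
theorem localTransform_one_zero_zero_one : localTransform (1 : n → R) 0 0 1 = 1 := by
  simp [localTransform]

omit [Fintype n] in
theorem localTransform_transpose (a b c d : n → R) :
    (localTransform a b c d)ᵀ = localTransform a c b d := by
  simp only [localTransform, fromBlocks_transpose, diagonal_transpose]

theorem localTransform_mul_localTransform (a b c d a' b' c' d' : n → R) :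
    localTransform a b c d * localTransform a' b' c' d' =
      localTransform (a * a' + b * c') (a * b' + b * d') (c * a' + d * c') (c * b' + d * d') := by
  simp only [localTransform, fromBlocks_multiply, diagonal_mul_diagonal, diagonal_add]
  rfl

theorem fromCols_mul_localTransform (A B : Matrix m n R) (a b c d : n → R) :
    fromCols A B * localTransform a b c d =
      fromCols (A * diagonal a + B * diagonal c) (A * diagonal b + B * diagonal d) := by
  rw [localTransform, fromCols_mul_fromBlocks]

theorem fromCols_mul_diagonal_eq_mul_localTransform (A B : Matrix m n R) (e : n → R) :
    fromCols A (B * diagonal e) = fromCols A B * localTransform 1 0 0 e := by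
  simp [fromCols_mul_localTransform]

theorem localTransform_mul_weightedJ_mul_transpose (a b c d e : n → R) :
    localTransform a b c d * weightedJ e * (localTransform a b c d)ᵀ =
      weightedJ ((a * d - b * c) * e) := by
  rw [localTransform_transpose]
  simp only [weightedJ, localTransform, fromBlocks_multiply,
    ← diagonal_zero, diagonal_neg, diagonal_mul_diagonal, diagonal_add]
  congr 2 <;> funext i <;> (try simp only [Pi.mul_apply, Pi.sub_apply]) <;> ring

theorem mul_localTransform_mul_weightedJ_mul_transpose (M : Matrix m (n ⊕ n) R)
    (a b c d e : n → R) :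
    M * localTransform a b c d * weightedJ e * (M * localTransform a b c d)ᵀ =
      M * weightedJ ((a * d - b * c) * e) * Mᵀ := by
  rw [← localTransform_mul_weightedJ_mul_transpose]
  simp only [Matrix.transpose_mul, Matrix.mul_assoc]

theorem fromCols_mul_weightedJ_mul_transpose (A B : Matrix m n R) (e : n → R) :
    fromCols A B * weightedJ e * (fromCols A B)ᵀ = B * diagonal e * Aᵀ - A * diagonal e * Bᵀ := by
  rw [weightedJ, fromCols_mul_fromBlocks, transpose_fromCols, fromCols_mul_fromRows]
  simp only [Matrix.mul_zero, Matrix.mul_neg, Matrix.neg_mul, zero_add, add_zero, sub_eq_add_neg]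

theorem fromCols_mul_diagonal_mul_weightedJ_one_mul_transpose (A B : Matrix m n R) (e : n → R) :
    fromCols A (B * diagonal e) * weightedJ (1 : n → R) * (fromCols A (B * diagonal e))ᵀ =
      fromCols A B * weightedJ e * (fromCols A B)ᵀ := by
  rw [fromCols_mul_diagonal_eq_mul_localTransform, mul_localTransform_mul_weightedJ_mul_transpose]
  simp

theorem mul_weightedJ_mul_transpose_eq_zero {M : Matrix m (n ⊕ n) R} {P : Matrix m n R}
    {S : Matrix n n R} {a b c d e : n → R} (hS : Sᵀ = S) (he : (a * d - b * c) * e = 1)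
    (hM : M = P * fromCols (1 : Matrix n n R) S * localTransform a b c d) :
    M * weightedJ e * Mᵀ = 0 := by
  set T := fromCols (1 : Matrix n n R) S
  have hT : T * weightedJ (1 : n → R) * Tᵀ = 0 := by
    rw [fromCols_mul_weightedJ_mul_transpose, hS]
    simp
  rw [hM, mul_localTransform_mul_weightedJ_mul_transpose, he]
  calc _ = P * (T * weightedJ (1 : n → R) * Tᵀ) * Pᵀ := by
        simp only [Matrix.transpose_mul, Matrix.mul_assoc]
    _ = 0 := by rw [hT, Matrix.mul_zero, Matrix.zero_mul]

end LocalTransform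

section ColumnSelection

variable {K : Type*} [Field K]

theorem LinearMap.apply_eq_zero_of_forall_smul_mem_span {ι M N : Type*} [AddCommGroup M]
    [Module K M] [AddCommGroup N] [Module K N] (f : M →ₗ[K] N) {v : ι → M} {s : Set ι}
    (hs : ∀ i ∉ s, ∃ a : K, a ≠ 0 ∧ a • v i ∈ Submodule.span K (v '' s))
    (hf : ∀ i ∈ s, f (v i) = 0) (i : ι) : f (v i) = 0 := by
  by_cases hi : i ∈ s
  · exact hf i hi
  obtain ⟨a, ha, hmem⟩ := hs i hi
  have hspan : Submodule.span K (v '' s) ≤ LinearMap.ker f := by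
    rw [Submodule.span_le]
    rintro _ ⟨j, hj, rfl⟩
    exact hf j hj
  have h := hspan hmem
  rw [LinearMap.mem_ker, map_smul, smul_eq_zero] at h
  exact h.resolve_left ha

variable {m n : Type*} [Fintype n]

theorem LinearIndepOn.eq_zero_of_mulVec_eq_zero {A : Matrix m n K} {s : Set n}
    (hs : LinearIndepOn K Aᵀ s) {c : n → K} (hc : ∀ j ∉ s, c j = 0) (hAc : A *ᵥ c = 0) :
    c = 0 := by
  classical
  have hsum : ∑ j ∈ Finset.univ.filter (· ∈ s), c j • Aᵀ j = 0 := by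
    rw [Finset.sum_filter_of_ne fun j _ hj => by_contra fun hjs => hj (by rw [hc j hjs, zero_smul])]
    rw [mulVec_eq_sum] at hAc
    simpa only [op_smul_eq_smul] using hAc
  funext j
  by_cases hj : j ∈ s
  · exact linearIndepOn_iff'.mp hs _ c (by simp) hsum j (by simpa using hj)
  · exact hc j hj

theorem linearIndependent_row_of_rank_eq [Fintype m] {M : Matrix m n K}
    (h : M.rank = Fintype.card m) : LinearIndependent K M.row := by
  rw [linearIndependent_iff_card_eq_finrank_span, ← h, rank_eq_finrank_span_row]
  rfl

variable [DecidableEq n]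

theorem exists_isUnit_mul_diagonal_add_mul_diagonal_one_sub {A B : Matrix n n K}
    (hiso : B * Aᵀ = A * Bᵀ) (hrows : LinearIndependent K (fromCols A B).row) :
    ∃ χ : n → K, (∀ i, χ i = 0 ∨ χ i = 1) ∧ IsUnit (A * diagonal χ + B * diagonal (1 - χ)) := by
  classical
  obtain ⟨s, hind, hmax⟩ := exists_maximal_linearIndepOn K Aᵀ
  refine ⟨s.indicator 1, fun i => by by_cases hi : i ∈ s <;> simp [hi], ?_⟩
  rw [← vecMul_injective_iff_isUnit, ← coe_vecMulLinear, injective_iff_map_eq_zero]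
  intro v hv
  have hvC (j : n) :
      (v ᵥ* A) j * s.indicator 1 j + (v ᵥ* B) j * (1 - s.indicator 1 j) = 0 := by
    simpa [vecMul_add, ← vecMul_vecMul, vecMul_diagonal] using congrFun hv j
  have hvA : v ᵥ* A = 0 := funext <|
    (dotProductEquiv K n v).apply_eq_zero_of_forall_smul_mem_span hmax
      fun j hj => (by simpa [hj] using hvC j : (v ᵥ* A) j = 0)
  -- `v B` is killed by `A` because `A (Bᵀ v) = B (Aᵀ v)`.
  have hAvB : A *ᵥ (v ᵥ* B) = 0 := by
    rw [← mulVec_transpose, mulVec_mulVec, ← hiso, ← mulVec_mulVec, mulVec_transpose, hvA,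
      mulVec_zero]
  have hvB : v ᵥ* B = 0 :=
    hind.eq_zero_of_mulVec_eq_zero (fun j hj => by simpa [hj, hvA] using hvC j) hAvB
  exact vecMul_injective_iff.mpr hrows (by simp [hvA, hvB])

end ColumnSelection

section StandardForm

variable {K n : Type*} [Field K] [Fintype n] [DecidableEq n]

theorem isUnit_localTransform {a b c d : n → K} (h : ∀ i, a i * d i - b i * c i ≠ 0) :
    IsUnit (localTransform a b c d) := by
  set k := (a * d - b * c)⁻¹
  have hk (i : n) : (a i * d i - b i * c i) * k i = 1 := mul_inv_cancel₀ (h i)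
  have hinv : localTransform a b c d * localTransform (d * k) (-b * k) (-c * k) (a * k) = 1 := by
    rw [localTransform_mul_localTransform, ← localTransform_one_zero_zero_one]
    congr 1 <;> funext i <;> simp only [Pi.mul_apply, Pi.add_apply, Pi.neg_apply,
      Pi.one_apply, Pi.zero_apply] <;> first | ring1 | linear_combination hk i
  exact (isUnit_iff_isUnit_det _).mpr (isUnit_det_of_right_inverse hinv)

theorem rank_fromCols_one (S : Matrix n n K) :
    (fromCols (1 : Matrix n n K) S).rank = Fintype.card n := by
  refine le_antisymm (rank_le_card_height _) ?_
  have h := rank_mul_le_left (fromCols 1 S) (fromRows (1 : Matrix n n K) 0)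
  rwa [fromCols_mul_fromRows, Matrix.mul_one, Matrix.mul_zero, add_zero, rank_one] at h

theorem isSymm_inv_mul_of_mul_transpose_comm {C D : Matrix n n K} (hC : IsUnit C)
    (h : D * Cᵀ = C * Dᵀ) : (C⁻¹ * D).IsSymm := by
  have hdet := (isUnit_iff_isUnit_det C).mp hC
  calc (C⁻¹ * D)ᵀ = C⁻¹ * (C * Dᵀ) * C⁻¹ᵀ := by
        rw [transpose_mul, nonsing_inv_mul_cancel_left (A := C) Dᵀ hdet]
    _ = C⁻¹ * D * (Cᵀ * C⁻¹ᵀ) := by rw [← h]; simp only [Matrix.mul_assoc]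
    _ = C⁻¹ * D := by rw [← transpose_mul, nonsing_inv_mul _ hdet, transpose_one, Matrix.mul_one]

def HasStandardForm (M : Matrix n (n ⊕ n) K) : Prop :=
  ∃ (P S : Matrix n n K) (a b c d : n → K), IsUnit P ∧ Sᵀ = S ∧
    (∀ i, a i * d i - b i * c i ≠ 0) ∧ M = P * fromCols (1 : Matrix n n K) S * localTransform a b c d

theorem hasStandardForm_iff (M : Matrix n (n ⊕ n) K) :
    HasStandardForm M ↔ ∃ (P S L1 L2 L3 L4 : Matrix n n K), IsUnit P ∧ Sᵀ = S ∧
      L1.IsDiag ∧ L2.IsDiag ∧ L3.IsDiag ∧ L4.IsDiag ∧ IsUnit (L1 * L4 - L2 * L3) ∧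
      M = P * fromCols (1 : Matrix n n K) S * fromBlocks L1 L2 L3 L4 := by
  have hunit (a b c d : n → K) : IsUnit (diagonal a * diagonal d - diagonal b * diagonal c) ↔
      ∀ i, a i * d i - b i * c i ≠ 0 := by
    rw [diagonal_mul_diagonal, diagonal_mul_diagonal, diagonal_sub, isUnit_diagonal,
      Pi.isUnit_iff]
    simp only [isUnit_iff_ne_zero]
  constructor
  · rintro ⟨P, S, a, b, c, d, hP, hS, hdet, hM⟩
    exact ⟨P, S, _, _, _, _, hP, hS, isDiag_diagonal a, isDiag_diagonal b, isDiag_diagonal c,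
      isDiag_diagonal d, (hunit a b c d).mpr hdet, hM⟩
  · rintro ⟨P, S, L1, L2, L3, L4, hP, hS, h1, h2, h3, h4, hdet, hM⟩
    rw [← h1.diagonal_diag, ← h2.diagonal_diag, ← h3.diagonal_diag, ← h4.diagonal_diag] at hdet hM
    exact ⟨P, S, _, _, _, _, hP, hS, (hunit _ _ _ _).mp hdet, hM⟩

theorem HasStandardForm.rank_eq {M : Matrix n (n ⊕ n) K} (h : HasStandardForm M) :
    M.rank = Fintype.card n := by
  obtain ⟨P, S, a, b, c, d, hP, -, hdet, rfl⟩ := h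
  rw [rank_mul_eq_left_of_isUnit_det _ _
      ((isUnit_iff_isUnit_det _).mp (isUnit_localTransform hdet)),
    rank_mul_eq_right_of_isUnit_det _ _ ((isUnit_iff_isUnit_det _).mp hP), rank_fromCols_one]

theorem HasStandardForm.exists_isotropic {M : Matrix n (n ⊕ n) K} (h : HasStandardForm M) :
    ∃ e : n → K, (∀ i, e i ≠ 0) ∧ M * weightedJ e * Mᵀ = 0 := by
  obtain ⟨P, S, a, b, c, d, -, hS, hdet, hM⟩ := h
  refine ⟨(a * d - b * c)⁻¹, fun i => inv_ne_zero (hdet i),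
    mul_weightedJ_mul_transpose_eq_zero hS ?_ hM⟩
  exact funext fun i => mul_inv_cancel₀ (hdet i)

theorem HasStandardForm.mul_localTransform {M : Matrix n (n ⊕ n) K} (h : HasStandardForm M)
    {a b c d : n → K} (hdet : ∀ i, a i * d i - b i * c i ≠ 0) :
    HasStandardForm (M * localTransform a b c d) := by
  obtain ⟨P, S, a', b', c', d', hP, hS, hdet', rfl⟩ := h
  refine ⟨P, S, _, _, _, _, hP, hS, fun i => ?_,
    by rw [Matrix.mul_assoc, localTransform_mul_localTransform]⟩
  convert mul_ne_zero (hdet' i) (hdet i) using 1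
  simp only [Pi.add_apply, Pi.mul_apply]
  ring

theorem hasStandardForm_fromCols {A B : Matrix n n K}
    (hrank : (fromCols A B).rank = Fintype.card n)
    (hiso : fromCols A B * weightedJ (1 : n → K) * (fromCols A B)ᵀ = 0) :
    HasStandardForm (fromCols A B) := by
  have hBA : B * Aᵀ = A * Bᵀ := by
    simpa [fromCols_mul_weightedJ_mul_transpose, sub_eq_zero] using hiso
  obtain ⟨χ, hχ, hC⟩ := exists_isUnit_mul_diagonal_add_mul_diagonal_one_sub hBA
    (linearIndependent_row_of_rank_eq hrank)
  set ψ := 1 - χ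
  have hrot : χ * χ + ψ * ψ = 1 := by
    funext i
    rcases hχ i with h | h <;> simp [ψ, h]
  set C := A * diagonal χ + B * diagonal ψ
  set D := A * diagonal (-ψ) + B * diagonal χ
  have hCD : fromCols A B * localTransform χ (-ψ) ψ χ = fromCols C D :=
    fromCols_mul_localTransform ..
  have hinv : localTransform χ (-ψ) ψ χ * localTransform χ ψ (-ψ) χ = 1 := by
    rw [localTransform_mul_localTransform, ← localTransform_one_zero_zero_one]
    congr 1 <;> first | ring1 | linear_combination hrot
  have hAB : fromCols A B = fromCols C D * localTransform χ ψ (-ψ) χ := by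
    rw [← hCD, Matrix.mul_assoc, hinv, Matrix.mul_one]
  have hDC : D * Cᵀ = C * Dᵀ := by
    have h : fromCols C D * weightedJ (1 : n → K) * (fromCols C D)ᵀ = 0 := by
      rw [← hCD, mul_localTransform_mul_weightedJ_mul_transpose,
        (by linear_combination hrot : (χ * χ - -ψ * ψ) * 1 = 1), hiso]
    simpa [fromCols_mul_weightedJ_mul_transpose, sub_eq_zero] using h
  have hdet := (isUnit_iff_isUnit_det C).mp hC
  refine ⟨C, C⁻¹ * D, χ, ψ, -ψ, χ, hC, (isSymm_inv_mul_of_mul_transpose_comm hC hDC).eq,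
    fun i => ?_, ?_⟩
  · have h1 := congrFun hrot i
    simp only [Pi.add_apply, Pi.mul_apply, Pi.one_apply] at h1
    rw [Pi.neg_apply, mul_neg, sub_neg_eq_add, h1]
    exact one_ne_zero
  · rw [hAB, mul_fromCols, Matrix.mul_one, mul_nonsing_inv_cancel_left (A := C) D hdet]

theorem fromCols_mul_diagonal_mul_localTransform_inv (A B : Matrix n n K) {δ : n → K}
    (hδ : ∀ i, δ i ≠ 0) :
    fromCols A (B * diagonal δ) * localTransform 1 0 0 δ⁻¹ = fromCols A B := by
  rw [← fromCols_mul_diagonal_eq_mul_localTransform, Matrix.mul_assoc, diagonal_mul_diagonal]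
  simp only [Pi.inv_apply, mul_inv_cancel₀ (hδ _), diagonal_one, Matrix.mul_one]

end StandardForm

/-- Feasibility test: `M = [M_l | M_r]` is expressible as `P·[I | S]·Λ` with `P`
invertible, `S` symmetric, `Λ` an LIT (diagonal blocks `Λᵢ` with
`Λ₁Λ₄ - Λ₂Λ₃` invertible) iff `rank M = N` and there is an invertible diagonal
`Δ` with `[M_l | M_r Δ]·J·[M_l | M_r Δ]ᵀ = 0`. -/
theorem feasibility_test {F : Type*} [Field F] {N : ℕ}
    (Ml Mr : Matrix (Fin N) (Fin N) F) :
    (∃ (P S L1 L2 L3 L4 : Matrix (Fin N) (Fin N) F),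
        IsUnit P ∧ Sᵀ = S ∧
        L1.IsDiag ∧ L2.IsDiag ∧ L3.IsDiag ∧ L4.IsDiag ∧
        IsUnit (L1 * L4 - L2 * L3) ∧
        Matrix.fromCols Ml Mr =
          P * Matrix.fromCols (1 : Matrix (Fin N) (Fin N) F) S *
            Matrix.fromBlocks L1 L2 L3 L4) ↔
      ((Matrix.fromCols Ml Mr).rank = N ∧
        ∃ Δ : Matrix (Fin N) (Fin N) F, Δ.IsDiag ∧ IsUnit Δ ∧
          Matrix.fromCols Ml (Mr * Δ) * Jmat F N *
            (Matrix.fromCols Ml (Mr * Δ))ᵀ = 0) := by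
  rw [← hasStandardForm_iff, Jmat_eq_weightedJ_one]
  constructor
  · intro h
    obtain ⟨e, he, hiso⟩ := h.exists_isotropic
    refine ⟨by simpa using h.rank_eq, diagonal e, isDiag_diagonal e,
      isUnit_diagonal.mpr (Pi.isUnit_iff.mpr fun i => (he i).isUnit), ?_⟩
    rwa [fromCols_mul_diagonal_mul_weightedJ_one_mul_transpose]
  · rintro ⟨hrank, Δ, hΔ, hΔu, hiso⟩
    obtain ⟨δ, rfl⟩ : ∃ δ, Δ = diagonal δ := ⟨Δ.diag, hΔ.diagonal_diag.symm⟩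
    have hδ (i : Fin N) : δ i ≠ 0 := (Pi.isUnit_iff.mp (isUnit_diagonal.mp hΔu) i).ne_zero
    have hrank' : (fromCols Ml (Mr * diagonal δ)).rank = Fintype.card (Fin N) := by
      rw [fromCols_mul_diagonal_eq_mul_localTransform, rank_mul_eq_left_of_isUnit_det _ _
        ((isUnit_iff_isUnit_det _).mp (isUnit_localTransform (by simpa using hδ))), hrank,
        Fintype.card_fin]
    have h := (hasStandardForm_fromCols hrank' hiso).mul_localTransform
      (a := 1) (b := 0) (c := 0) (d := δ⁻¹) (by simpa using hδ)
    rwa [fromCols_mul_diagonal_mul_localTransform_inv _ _ hδ] at h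
end

section
/- Let α₁,…,α_n be distinct elements of F_q and u₁,…,u_n nonzero elements. Define v_j = u_j⁻¹ · ∏_{i≠j} (α_j - α_i)⁻¹. Then the n×k generalized Reed–Solomon generator matrix G_{GRS(α,u)} (with (i,m) entry u_i α_i^{m-1}, 1 ≤ m ≤ k) and the n×(n-k) matrix G_{GRS(α,v)} (with (i,m) entry v_i α_i^{m-1}, 1 ≤ m ≤ n-k) satisfy G_{GRS(α,u)}ᵀ · G_{GRS(α,v)} = 0, i.e., GRS(α,v) with dimension n-k is contained in the dual of GRS(α,u) with dimension k. -/
open Matrix Polynomial Finset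

/-- The `#s - 1` coefficient of `X ^ m` vanishes, and Lagrange interpolation expresses that
coefficient as this weighted sum of the values `v i ^ m`. -/
theorem Lagrange.sum_pow_div_prod_sub_eq_zero {F ι : Type*} [Field F] [DecidableEq ι]
    {s : Finset ι} {v : ι → F} (hvs : Set.InjOn v s) {m : ℕ} (hm : m + 1 < #s) :
    ∑ i ∈ s, v i ^ m / ∏ j ∈ s.erase i, (v i - v j) = 0 := by
  have hdeg : (X ^ m : F[X]).degree < #s := by
    rw [degree_X_pow]
    exact_mod_cast (by omega : m < #s)
  simpa [coeff_X_pow, show #s - 1 ≠ m by omega] using (Lagrange.coeff_eq_sum hvs hdeg).symm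

theorem grs_dual_orthogonal_general {F : Type*} [Field F] {n k : ℕ}
    (α u : Fin n → F) (hα : Function.Injective α) (hu : ∀ i, u i ≠ 0) :
    (Matrix.of fun (i : Fin n) (m : Fin k) => u i * α i ^ (m : ℕ))ᵀ *
      (Matrix.of fun (i : Fin n) (m : Fin (n - k)) =>
        ((u i)⁻¹ * (∏ j ∈ Finset.univ.erase i, (α i - α j))⁻¹) * α i ^ (m : ℕ)) = 0 := by
  ext a b
  have hab : (a : ℕ) + b + 1 < #(univ : Finset (Fin n)) := by
    rw [card_univ, Fintype.card_fin]
    omega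
  rw [mul_apply, Matrix.zero_apply, ← Lagrange.sum_pow_div_prod_sub_eq_zero hα.injOn hab]
  refine sum_congr rfl fun i _ => ?_
  simp only [transpose_apply, of_apply, pow_add]
  field_simp [hu i]

/-- Dual GRS construction: with distinct `α i`, nonzero `u i`, and
`v j = u j⁻¹ · (∏_{i ≠ j} (α j - α i))⁻¹`, the GRS generator matrices of
dimensions `k` and `n - k` satisfy `G_uᵀ · G_v = 0`. -/
theorem grs_dual_orthogonal {F : Type*} [Field F] {n k : ℕ} (hk : k ≤ n)
    (α u : Fin n → F) (hα : Function.Injective α) (hu : ∀ i, u i ≠ 0) :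
    (Matrix.of fun (i : Fin n) (m : Fin k) => u i * α i ^ (m : ℕ))ᵀ *
      (Matrix.of fun (i : Fin n) (m : Fin (n - k)) =>
        ((u i)⁻¹ * (∏ j ∈ Finset.univ.erase i, (α i - α j))⁻¹) * α i ^ (m : ℕ)) = 0 :=
  grs_dual_orthogonal_general α u hα hu
end
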